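/- arXiv:2509.12376 — 3 statements merged into one kernel-verified Lean document; each statement's English description precedes it below -/
import Mathlib

section
/- Every facet of Δ̃ₙ satisfies: (1) if x_{ij} ∉ U then a_{ijk} ∈ U for all k ∈ {1,2,3,4}; (2) the set of x_{ij} ∈ U with a_{ijk} ∈ U for all four k is a facet of Δₙ (hence has n+3 elements); (3) for every other x_{ij} ∈ U there is exactly one k with a_{ijk} ∉ U. -/
open Finset

/-- The profile of a subset `U` of the ground set `{x_{ij}} = Fin n × Fin 3`:
`profile U i` is the number of `j` with `x_{ij} ∈ U`. -/
def profileOf {n : ℕ} (U : Finset (Fin n × Fin 3)) (i : Fin n) : ℕ :=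
  (U.filter (fun p => p.1 = i)).card

/-- A profile is *bad* if, up to permutation of the indices, it equals
`(3,3,0,…,0)`, `(3,2,2,0,…,0)` or `(2,2,2,2,0,…,0)`. -/
def IsBadProfile {n : ℕ} (c : Fin n → ℕ) : Prop :=
  (∃ i j, i ≠ j ∧ c i = 3 ∧ c j = 3 ∧ ∀ k, k ≠ i → k ≠ j → c k = 0) ∨
  (∃ i j k, i ≠ j ∧ i ≠ k ∧ j ≠ k ∧ c i = 3 ∧ c j = 2 ∧ c k = 2 ∧
    ∀ l, l ≠ i → l ≠ j → l ≠ k → c l = 0) ∨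
  (∃ i j k l, i ≠ j ∧ i ≠ k ∧ i ≠ l ∧ j ≠ k ∧ j ≠ l ∧ k ≠ l ∧
    c i = 2 ∧ c j = 2 ∧ c k = 2 ∧ c l = 2 ∧
    ∀ m, m ≠ i → m ≠ j → m ≠ k → m ≠ l → c m = 0)

/-- `U` is a face of the simplicial complex `Δₙ`: it contains no (minimal)
nonface, i.e. no subset whose profile is bad. -/
def IsFaceD (n : ℕ) (U : Finset (Fin n × Fin 3)) : Prop :=
  ¬ ∃ W : Finset (Fin n × Fin 3), W ⊆ U ∧ IsBadProfile (profileOf W)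

/-- `U` is a facet (maximal face) of `Δₙ`. -/
def IsFacetD (n : ℕ) (U : Finset (Fin n × Fin 3)) : Prop :=
  IsFaceD n U ∧ ∀ W : Finset (Fin n × Fin 3), IsFaceD n W → U ⊆ W → W = U

/-- A profile is a permutation of `(3,2,1,1,…,1)`. -/
def IsProfile321 {n : ℕ} (c : Fin n → ℕ) : Prop :=
  ∃ i j, i ≠ j ∧ c i = 3 ∧ c j = 2 ∧ ∀ k, k ≠ i → k ≠ j → c k = 1

/-- A profile is a permutation of `(2,2,2,1,…,1)`. -/
def IsProfile2221 {n : ℕ} (c : Fin n → ℕ) : Prop :=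
  ∃ i j k, i ≠ j ∧ i ≠ k ∧ j ≠ k ∧ c i = 2 ∧ c j = 2 ∧ c k = 2 ∧
    ∀ l, l ≠ i → l ≠ j → l ≠ k → c l = 1

/-- The ground set of `Δ̃ₙ`: the `3n` image variables `x_{ij}` together with the
`12n` camera variables `a_{ijk}`. -/
abbrev TGround (n : ℕ) := (Fin n × Fin 3) ⊕ (Fin n × Fin 3 × Fin 4)

/-- The minimal nonface of `Δ̃ₙ` attached to a set `N` of `x`-variables (the
spread of a focal): `N` together with all four camera variables `a_{ijk}` for
every `x_{ij} ∈ N`. -/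
def tildeNonface {n : ℕ} (N : Finset (Fin n × Fin 3)) : Finset (TGround n) :=
  N.image Sum.inl ∪
    (N ×ˢ (Finset.univ : Finset (Fin 4))).image
      (fun q => Sum.inr (q.1.1, q.1.2, q.2))

/-- `U` is a face of `Δ̃ₙ`: it contains no set `tildeNonface N` for `N` a set of
`x`-variables with bad profile. -/
def IsFaceT (n : ℕ) (U : Finset (TGround n)) : Prop :=
  ¬ ∃ N : Finset (Fin n × Fin 3),
      IsBadProfile (profileOf N) ∧ tildeNonface N ⊆ U

/-- `U` is a facet (maximal face) of `Δ̃ₙ`. -/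
def IsFacetT (n : ℕ) (U : Finset (TGround n)) : Prop :=
  IsFaceT n U ∧ ∀ W : Finset (TGround n), IsFaceT n W → U ⊆ W → W = U

section Basic
variable {n : ℕ}

lemma profileOf_mono {W S : Finset (Fin n × Fin 3)} (h : W ⊆ S) (i : Fin n) :
    profileOf W i ≤ profileOf S i :=
  Finset.card_le_card (Finset.filter_subset_filter _ h)

lemma profileOf_le_three (S : Finset (Fin n × Fin 3)) (i : Fin n) :
    profileOf S i ≤ 3 := by
  have h : (S.filter fun p => p.1 = i).card ≤ (Finset.univ : Finset (Fin 3)).card :=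
    Finset.card_le_card_of_injOn Prod.snd (fun p _ => mem_univ _)
      (fun p hp q hq h => by
        simp only [Finset.coe_filter, Set.mem_setOf_eq] at hp hq
        exact Prod.ext (hp.2.trans hq.2.symm) h)
  simpa [profileOf] using h

lemma profileOf_insert {S : Finset (Fin n × Fin 3)} {p : Fin n × Fin 3} (hp : p ∉ S)
    (i : Fin n) :
    profileOf (insert p S) i = if p.1 = i then profileOf S i + 1 else profileOf S i := by
  rw [profileOf, Finset.filter_insert]
  split
  · rw [Finset.card_insert_of_notMem (fun h => hp (Finset.mem_filter.mp h).1)]; rfl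
  · rfl

lemma exists_subset_profile (S : Finset (Fin n × Fin 3)) (d : Fin n → ℕ)
    (hd : ∀ i, d i ≤ profileOf S i) :
    ∃ W, W ⊆ S ∧ profileOf W = d := by
  choose T hT1 hT2 using fun i =>
    Finset.exists_subset_card_eq (s := S.filter fun p => p.1 = i) (n := d i)
      (by simpa [profileOf] using hd i)
  refine ⟨Finset.univ.biUnion T, ?_, ?_⟩
  · intro x hx
    rw [Finset.mem_biUnion] at hx
    obtain ⟨i, _, hi⟩ := hx
    exact (Finset.mem_filter.mp (hT1 i hi)).1
  · funext i
    have key : (Finset.univ.biUnion T).filter (fun p => p.1 = i) = T i := by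
      apply Finset.Subset.antisymm
      · intro x hx
        rw [Finset.mem_filter, Finset.mem_biUnion] at hx
        obtain ⟨⟨j, _, hj⟩, hxi⟩ := hx
        have hxj : x.1 = j := (Finset.mem_filter.mp (hT1 j hj)).2
        rwa [show j = i from by rw [← hxj, hxi]] at hj
      · intro x hx
        rw [Finset.mem_filter, Finset.mem_biUnion]
        exact ⟨⟨i, Finset.mem_univ i, hx⟩, (Finset.mem_filter.mp (hT1 i hx)).2⟩
    rw [profileOf, key, hT2]

lemma card_ge_three {α : Type*} [DecidableEq α] {s : Finset α} {a b c : α}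
    (ha : a ∈ s) (hb : b ∈ s) (hc : c ∈ s) (hab : a ≠ b) (hac : a ≠ c) (hbc : b ≠ c) :
    3 ≤ s.card := by
  have hsub : ({a, b, c} : Finset α) ⊆ s := by
    intro x hx; simp only [Finset.mem_insert, Finset.mem_singleton] at hx
    rcases hx with rfl | rfl | rfl <;> assumption
  have : ({a, b, c} : Finset α).card = 3 := by
    rw [Finset.card_insert_of_notMem (by simp [hab, hac]),
      Finset.card_insert_of_notMem (by simp [hbc]), Finset.card_singleton]
  rw [← this]; exact Finset.card_le_card hsub

lemma card_ge_four {α : Type*} [DecidableEq α] {s : Finset α} {a b c d : α}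
    (ha : a ∈ s) (hb : b ∈ s) (hc : c ∈ s) (hd : d ∈ s)
    (hab : a ≠ b) (hac : a ≠ c) (had : a ≠ d) (hbc : b ≠ c) (hbd : b ≠ d) (hcd : c ≠ d) :
    4 ≤ s.card := by
  have hsub : ({a, b, c, d} : Finset α) ⊆ s := by
    intro x hx; simp only [Finset.mem_insert, Finset.mem_singleton] at hx
    rcases hx with rfl | rfl | rfl | rfl <;> assumption
  have : ({a, b, c, d} : Finset α).card = 4 := by
    rw [Finset.card_insert_of_notMem (by simp [hab, hac, had]),
      Finset.card_insert_of_notMem (by simp [hbc, hbd]),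
      Finset.card_insert_of_notMem (by simp [hcd]), Finset.card_singleton]
  rw [← this]; exact Finset.card_le_card hsub

end Basic
section Tnf
variable {n : ℕ}

lemma mem_tnf_inl {N : Finset (Fin n × Fin 3)} {q : Fin n × Fin 3} :
    Sum.inl q ∈ tildeNonface N ↔ q ∈ N := by
  simp only [tildeNonface, Finset.mem_union, Finset.mem_image, Finset.mem_product]
  constructor
  · rintro (⟨a, ha, h⟩ | ⟨a, _, h⟩)
    · rwa [← Sum.inl.inj h]
    · exact absurd h (by simp)
  · exact fun h => Or.inl ⟨q, h, rfl⟩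

lemma mem_tnf_inr {N : Finset (Fin n × Fin 3)} {p : Fin n × Fin 3} {k : Fin 4} :
    Sum.inr (p.1, p.2, k) ∈ tildeNonface N ↔ p ∈ N := by
  simp only [tildeNonface, Finset.mem_union, Finset.mem_image, Finset.mem_product]
  constructor
  · rintro (⟨a, _, h⟩ | ⟨a, ⟨ha, _⟩, h⟩)
    · exact absurd h (by simp)
    · simp only [Sum.inr.injEq, Prod.mk.injEq] at h
      obtain ⟨h1, h2, _⟩ := h
      rwa [show a.1 = p from Prod.ext h1 h2] at ha
  · intro h
    exact Or.inr ⟨((p.1, p.2), k), ⟨by simpa using h, Finset.mem_univ _⟩, rfl⟩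

lemma tnf_subset {N : Finset (Fin n × Fin 3)} {V : Finset (TGround n)} :
    tildeNonface N ⊆ V ↔
      ∀ q ∈ N, Sum.inl q ∈ V ∧ ∀ k : Fin 4, Sum.inr (q.1, q.2, k) ∈ V := by
  constructor
  · intro h q hq
    exact ⟨h (mem_tnf_inl.mpr hq), fun k => h (mem_tnf_inr.mpr hq)⟩
  · intro h x hx
    rcases x with q | ⟨a, b, k⟩
    · exact (h q (mem_tnf_inl.mp hx)).1
    · exact (h (a, b) (mem_tnf_inr.mp hx)).2 k

end Tnf
section FacetCard
variable {n : ℕ}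

lemma bad_le_consequence (c' : Fin n → ℕ) (W : Finset (Fin n × Fin 3))
    (hle : ∀ m, profileOf W m ≤ c' m) (hbad : IsBadProfile (profileOf W)) :
    2 ≤ (Finset.univ.filter fun m => 3 ≤ c' m).card ∨
    (1 ≤ (Finset.univ.filter fun m => 3 ≤ c' m).card ∧
      3 ≤ (Finset.univ.filter fun m => 2 ≤ c' m).card) ∨
    4 ≤ (Finset.univ.filter fun m => 2 ≤ c' m).card := by
  rcases hbad with ⟨i, j, hij, h3i, h3j, -⟩ | ⟨i, j, k, hij, hik, hjk, h3i, h2j, h2k, -⟩ |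
    ⟨i, j, k, l, hij, hik, hil, hjk, hjl, hkl, h2i, h2j, h2k, h2l, -⟩
  · exact Or.inl (Finset.one_lt_card.mpr
      ⟨i, Finset.mem_filter.mpr ⟨Finset.mem_univ _, h3i ▸ hle i⟩,
       j, Finset.mem_filter.mpr ⟨Finset.mem_univ _, h3j ▸ hle j⟩, hij⟩)
  · refine Or.inr (Or.inl ⟨?_, ?_⟩)
    · exact Finset.card_pos.mpr ⟨i, Finset.mem_filter.mpr ⟨Finset.mem_univ _, h3i ▸ hle i⟩⟩
    · have h3i' : 3 ≤ c' i := h3i ▸ hle i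
      exact card_ge_three (Finset.mem_filter.mpr ⟨Finset.mem_univ _, by omega⟩)
        (Finset.mem_filter.mpr ⟨Finset.mem_univ _, h2j ▸ hle j⟩)
        (Finset.mem_filter.mpr ⟨Finset.mem_univ _, h2k ▸ hle k⟩) hij hik hjk
  · exact Or.inr (Or.inr (card_ge_four
      (Finset.mem_filter.mpr ⟨Finset.mem_univ _, h2i ▸ hle i⟩)
      (Finset.mem_filter.mpr ⟨Finset.mem_univ _, h2j ▸ hle j⟩)
      (Finset.mem_filter.mpr ⟨Finset.mem_univ _, h2k ▸ hle k⟩)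
      (Finset.mem_filter.mpr ⟨Finset.mem_univ _, h2l ▸ hle l⟩)
      hij hik hil hjk hjl hkl))

lemma facetD_card (hn : 4 ≤ n) (S : Finset (Fin n × Fin 3))
    (hS : IsFacetD n S) : S.card = n + 3 := by
  have hface := hS.1
  -- Face conditions on the profile of S
  have hA : (Finset.univ.filter fun m => 3 ≤ profileOf S m).card ≤ 1 := by
    by_contra h
    push_neg at h
    obtain ⟨i, hi, j, hj, hij⟩ := Finset.one_lt_card.mp h
    rw [Finset.mem_filter] at hi hj
    obtain ⟨W, hWS, hW⟩ := exists_subset_profile S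
      (fun m => if m = i then 3 else if m = j then 3 else 0)
      (fun m => by
        split_ifs with h1 h2
        · subst h1; exact hi.2
        · subst h2; exact hj.2
        · exact Nat.zero_le _)
    refine hface ⟨W, hWS, Or.inl ⟨i, j, hij, ?_, ?_, ?_⟩⟩
    · simp [hW]
    · simp [hW]
    · intro k hki hkj; simp [hW, hki, hkj]
  have hAB : 1 ≤ (Finset.univ.filter fun m => 3 ≤ profileOf S m).card →
      (Finset.univ.filter fun m => 2 ≤ profileOf S m).card ≤ 2 := by
    intro h1
    by_contra hB3
    push_neg at hB3
    obtain ⟨i, hi⟩ := Finset.card_pos.mp h1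
    rw [Finset.mem_filter] at hi
    have hi2 : i ∈ Finset.univ.filter fun m => 2 ≤ profileOf S m :=
      Finset.mem_filter.mpr ⟨Finset.mem_univ _, by omega⟩
    have herase : 2 ≤ ((Finset.univ.filter fun m => 2 ≤ profileOf S m).erase i).card := by
      rw [Finset.card_erase_of_mem hi2]; omega
    obtain ⟨j, hj, k, hk, hjk⟩ := Finset.one_lt_card.mp herase
    rw [Finset.mem_erase, Finset.mem_filter] at hj hk
    obtain ⟨W, hWS, hW⟩ := exists_subset_profile S
      (fun m => if m = i then 3 else if m = j then 2 else if m = k then 2 else 0)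
      (fun m => by
        split_ifs with h1 h2 h3
        · subst h1; exact hi.2
        · subst h2; exact hj.2.2
        · subst h3; exact hk.2.2
        · exact Nat.zero_le _)
    refine hface ⟨W, hWS, Or.inr (Or.inl
      ⟨i, j, k, Ne.symm hj.1, Ne.symm hk.1, hjk, ?_, ?_, ?_, ?_⟩)⟩
    · simp [hW]
    · simp [hW, hj.1]
    · simp [hW, hk.1, Ne.symm hjk]
    · intro l hli hlj hlk; simp [hW, hli, hlj, hlk]
  have hB : (Finset.univ.filter fun m => 2 ≤ profileOf S m).card ≤ 3 := by
    by_contra h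
    push_neg at h
    obtain ⟨i, hi⟩ := Finset.card_pos.mp (by omega :
      0 < (Finset.univ.filter fun m => 2 ≤ profileOf S m).card)
    have e1 := Finset.card_erase_of_mem hi
    obtain ⟨j, hj⟩ := Finset.card_pos.mp (by omega :
      0 < ((Finset.univ.filter fun m => 2 ≤ profileOf S m).erase i).card)
    have e2 := Finset.card_erase_of_mem hj
    have h2 : 2 ≤ (((Finset.univ.filter fun m => 2 ≤ profileOf S m).erase i).erase j).card := by
      omega
    obtain ⟨k, hk, l, hl, hkl⟩ := Finset.one_lt_card.mp h2
    rw [Finset.mem_erase, Finset.mem_erase, Finset.mem_filter] at hk hl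
    rw [Finset.mem_erase, Finset.mem_filter] at hj
    rw [Finset.mem_filter] at hi
    obtain ⟨W, hWS, hW⟩ := exists_subset_profile S
      (fun m => if m = i then 2 else if m = j then 2 else if m = k then 2 else
        if m = l then 2 else 0)
      (fun m => by
        split_ifs with h1 h2 h3 h4
        · subst h1; exact hi.2
        · subst h2; exact hj.2.2
        · subst h3; exact hk.2.2.2
        · subst h4; exact hl.2.2.2
        · exact Nat.zero_le _)
    refine hface ⟨W, hWS, Or.inr (Or.inr
      ⟨i, j, k, l, Ne.symm hj.1, Ne.symm hk.2.1, Ne.symm hl.2.1, Ne.symm hk.1, Ne.symm hl.1,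
        hkl, ?_, ?_, ?_, ?_, ?_⟩)⟩
    · simp [hW]
    · simp [hW, hj.1]
    · simp [hW, hk.2.1, hk.1]
    · simp [hW, hl.2.1, hl.1, Ne.symm hkl]
    · intro m hmi hmj hmk hml; simp [hW, hmi, hmj, hmk, hml]
  -- Maximality step
  have step : ∀ i : Fin n, profileOf S i ≤ 1 →
      2 ≤ (Finset.univ.filter fun m => 3 ≤ profileOf S m).card ∨
      (1 ≤ (Finset.univ.filter fun m => 3 ≤ profileOf S m).card ∧
        3 ≤ (Finset.univ.filter fun m => 2 ≤ profileOf S m).card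
              + (if profileOf S i = 1 then 1 else 0)) ∨
      4 ≤ (Finset.univ.filter fun m => 2 ≤ profileOf S m).card
              + (if profileOf S i = 1 then 1 else 0) := by
    intro i hci
    have hj : ∃ j : Fin 3, (i, j) ∉ S := by
      by_contra h
      push_neg at h
      have h3 : (Finset.univ : Finset (Fin 3)).card ≤ (S.filter fun p => p.1 = i).card :=
        Finset.card_le_card_of_injOn (fun j => (i, j))
          (fun j _ => Finset.mem_filter.mpr ⟨h j, rfl⟩)
          (fun a _ b _ hab => congrArg Prod.snd hab)
      have : 3 ≤ profileOf S i := by simpa [profileOf] using h3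
      omega
    obtain ⟨j, hj⟩ := hj
    have hnotface : ¬ IsFaceD n (insert (i, j) S) := by
      intro hf
      have heq := hS.2 _ hf (Finset.subset_insert _ _)
      exact hj (heq ▸ Finset.mem_insert_self (i, j) S)
    rw [IsFaceD, not_not] at hnotface
    obtain ⟨W, hWS, hbad⟩ := hnotface
    have key := bad_le_consequence (profileOf (insert (i, j) S)) W
      (fun m => profileOf_mono hWS m) hbad
    have hAbound : (Finset.univ.filter fun m => 3 ≤ profileOf (insert (i, j) S) m).card ≤
        (Finset.univ.filter fun m => 3 ≤ profileOf S m).card := by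
      apply Finset.card_le_card
      intro m hm
      rw [Finset.mem_filter] at hm ⊢
      refine ⟨hm.1, ?_⟩
      have hm2 := hm.2
      rw [profileOf_insert hj] at hm2
      by_cases h : (i, j).1 = m
      · rw [if_pos h] at hm2
        rw [← h] at hm2 ⊢
        simp only at hm2
        omega
      · rwa [if_neg h] at hm2
    have hBbound : (Finset.univ.filter fun m => 2 ≤ profileOf (insert (i, j) S) m).card ≤
        (Finset.univ.filter fun m => 2 ≤ profileOf S m).card
          + (if profileOf S i = 1 then 1 else 0) := by
      by_cases h1 : profileOf S i = 1
      · rw [if_pos h1]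
        have hsub : (Finset.univ.filter fun m => 2 ≤ profileOf (insert (i, j) S) m) ⊆
            insert i (Finset.univ.filter fun m => 2 ≤ profileOf S m) := by
          intro m hm
          rw [Finset.mem_filter] at hm
          have hm2 := hm.2
          rw [profileOf_insert hj] at hm2
          by_cases h : (i, j).1 = m
          · exact (by rw [← h]; exact Finset.mem_insert_self _ _)
          · rw [if_neg h] at hm2
            exact Finset.mem_insert_of_mem (Finset.mem_filter.mpr ⟨Finset.mem_univ _, hm2⟩)
        calc _ ≤ (insert i (Finset.univ.filter fun m => 2 ≤ profileOf S m)).card :=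
              Finset.card_le_card hsub
          _ ≤ _ := Finset.card_insert_le _ _
      · rw [if_neg h1, Nat.add_zero]
        apply Finset.card_le_card
        intro m hm
        rw [Finset.mem_filter] at hm ⊢
        refine ⟨hm.1, ?_⟩
        have hm2 := hm.2
        rw [profileOf_insert hj] at hm2
        by_cases h : (i, j).1 = m
        · rw [if_pos h] at hm2
          rw [← h] at hm2 ⊢
          simp only at hm2
          omega
        · rwa [if_neg h] at hm2
    rcases key with h | ⟨h1, h2⟩ | h
    · exact Or.inl (le_trans h hAbound)
    · exact Or.inr (Or.inl ⟨le_trans h1 hAbound, le_trans h2 hBbound⟩)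
    · exact Or.inr (Or.inr (le_trans h hBbound))
  -- every index has positive profile
  have hpos : ∀ i, 1 ≤ profileOf S i := by
    intro i
    by_contra h
    push_neg at h
    have h0 : profileOf S i = 0 := by omega
    have hstep := step i (by omega)
    rw [if_neg (by omega)] at hstep
    rcases hstep with h' | ⟨h1, h2⟩ | h'
    · omega
    · have := hAB h1; omega
    · omega
  -- there is an index of profile 1
  have hi0 : ∃ i0 : Fin n, profileOf S i0 = 1 := by
    by_contra h
    push_neg at h
    have hall : ∀ i, 2 ≤ profileOf S i := fun i => by
      have := hpos i; have := h i; omega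
    have hsub : (Finset.univ : Finset (Fin n)) ⊆
        Finset.univ.filter fun m => 2 ≤ profileOf S m :=
      fun i _ => Finset.mem_filter.mpr ⟨Finset.mem_univ _, hall i⟩
    have hcard := Finset.card_le_card hsub
    rw [Finset.card_univ, Fintype.card_fin] at hcard
    omega
  obtain ⟨i0, hi0⟩ := hi0
  have hstep := step i0 (by omega)
  rw [if_pos hi0] at hstep
  have hsum3 : (Finset.univ.filter fun m => 3 ≤ profileOf S m).card
      + (Finset.univ.filter fun m => 2 ≤ profileOf S m).card = 3 := by
    rcases hstep with h | ⟨h1, h2⟩ | h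
    · omega
    · have := hAB h1; omega
    · by_cases hA1 : 1 ≤ (Finset.univ.filter fun m => 3 ≤ profileOf S m).card
      · have := hAB hA1; omega
      · omega
  -- compute the cardinality
  have hcard : S.card = ∑ i : Fin n, profileOf S i := by
    rw [Finset.card_eq_sum_card_fiberwise
      (f := Prod.fst) (t := Finset.univ) (fun x _ => Finset.mem_univ _)]
    rfl
  have hval : ∀ i : Fin n, profileOf S i =
      1 + (if 2 ≤ profileOf S i then 1 else 0) + (if 3 ≤ profileOf S i then 1 else 0) := by
    intro i
    have h1 := hpos i
    have h3 := profileOf_le_three S i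
    split_ifs <;> omega
  have hsum : ∑ i : Fin n, profileOf S i =
      n + ((Finset.univ.filter fun m => 2 ≤ profileOf S m).card
        + (Finset.univ.filter fun m => 3 ≤ profileOf S m).card) := by
    rw [Finset.sum_congr rfl (fun i _ => hval i), Finset.sum_add_distrib,
      Finset.sum_add_distrib, Finset.sum_const, ← Finset.card_filter, ← Finset.card_filter,
      Finset.card_univ, Fintype.card_fin, smul_eq_mul, mul_one]
    omega
  omega

end FacetCard
/-- Properties of facets of `Δ̃ₙ` (`n ≥ 4`): (1) if `x_{ij} ∉ U` then all four
`a_{ijk} ∈ U`; (2) the set of `x_{ij} ∈ U` having all four `a_{ijk} ∈ U` is a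
facet of `Δₙ` (hence has `n + 3` elements); (3) every other `x_{ij} ∈ U` is
missing exactly one `a_{ijk}` from `U`. -/
theorem tilde_Delta_n_facet_structure (n : ℕ) (hn : 4 ≤ n)
    (U : Finset (TGround n)) (hU : IsFacetT n U) :
    (∀ p : Fin n × Fin 3, Sum.inl p ∉ U →
      ∀ k : Fin 4, Sum.inr (p.1, p.2, k) ∈ U) ∧
    (IsFacetD n (Finset.univ.filter (fun p : Fin n × Fin 3 =>
        Sum.inl p ∈ U ∧ ∀ k : Fin 4, Sum.inr (p.1, p.2, k) ∈ U)) ∧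
      (Finset.univ.filter (fun p : Fin n × Fin 3 =>
        Sum.inl p ∈ U ∧ ∀ k : Fin 4, Sum.inr (p.1, p.2, k) ∈ U)).card = n + 3) ∧
    (∀ p : Fin n × Fin 3, Sum.inl p ∈ U →
      (¬ ∀ k : Fin 4, Sum.inr (p.1, p.2, k) ∈ U) →
      ∃! k : Fin 4, Sum.inr (p.1, p.2, k) ∉ U) := by
  obtain ⟨hface, hmax⟩ := hU
  set S := Finset.univ.filter (fun p : Fin n × Fin 3 =>
    Sum.inl p ∈ U ∧ ∀ k : Fin 4, Sum.inr (p.1, p.2, k) ∈ U) with hSdef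
  have memS : ∀ q : Fin n × Fin 3,
      q ∈ S ↔ (Sum.inl q ∈ U ∧ ∀ k : Fin 4, Sum.inr (q.1, q.2, k) ∈ U) := by
    intro q
    rw [hSdef, Finset.mem_filter]
    simp
  -- Part 1
  have claim1 : ∀ p : Fin n × Fin 3, Sum.inl p ∉ U →
      ∀ k : Fin 4, Sum.inr (p.1, p.2, k) ∈ U := by
    intro p hp k
    by_contra hk
    have hface' : IsFaceT n (insert (Sum.inr (p.1, p.2, k)) U) := by
      rintro ⟨N, hbad, hsub⟩
      by_cases hpN : p ∈ N
      · have hmem : Sum.inl p ∈ insert (Sum.inr (p.1, p.2, k)) U :=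
          hsub (mem_tnf_inl.mpr hpN)
        rcases Finset.mem_insert.mp hmem with h | h
        · exact absurd h (by simp)
        · exact hp h
      · refine hface ⟨N, hbad, fun x hx => ?_⟩
        rcases Finset.mem_insert.mp (hsub hx) with h | h
        · subst h
          exact absurd (mem_tnf_inr.mp hx) hpN
        · exact h
    have heq := hmax _ hface' (Finset.subset_insert _ _)
    exact hk (heq ▸ Finset.mem_insert_self _ _)
  -- uniqueness of missing camera variable
  have claimU : ∀ (p : Fin n × Fin 3) (k1 k2 : Fin 4), k1 ≠ k2 →
      Sum.inr (p.1, p.2, k1) ∉ U → Sum.inr (p.1, p.2, k2) ∉ U → False := by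
    intro p k1 k2 hne h1 h2
    have hface' : IsFaceT n (insert (Sum.inr (p.1, p.2, k1)) U) := by
      rintro ⟨N, hbad, hsub⟩
      by_cases hpN : p ∈ N
      · have hmem : Sum.inr (p.1, p.2, k2) ∈ insert (Sum.inr (p.1, p.2, k1)) U :=
          hsub (mem_tnf_inr.mpr hpN)
        rcases Finset.mem_insert.mp hmem with h | h
        · simp only [Sum.inr.injEq, Prod.mk.injEq] at h
          exact hne h.2.2.symm
        · exact h2 h
      · refine hface ⟨N, hbad, fun x hx => ?_⟩
        rcases Finset.mem_insert.mp (hsub hx) with h | h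
        · subst h
          exact absurd (mem_tnf_inr.mp hx) hpN
        · exact h
    have heq := hmax _ hface' (Finset.subset_insert _ _)
    exact h1 (heq ▸ Finset.mem_insert_self _ _)
  -- S is a face of Δₙ
  have hSface : IsFaceD n S := by
    rintro ⟨W, hWS, hbad⟩
    refine hface ⟨W, hbad, tnf_subset.mpr fun q hq => ?_⟩
    exact (memS q).mp (hWS hq)
  -- maximality of S, pointwise
  have hSmax : ∀ p : Fin n × Fin 3, p ∉ S → ¬ IsFaceD n (insert p S) := by
    intro p hpS hf
    by_cases hpU : Sum.inl p ∈ U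
    · have hk0 : ∃ k0 : Fin 4, Sum.inr (p.1, p.2, k0) ∉ U := by
        by_contra h
        push_neg at h
        exact hpS ((memS p).mpr ⟨hpU, h⟩)
      obtain ⟨k0, hk0⟩ := hk0
      have hface' : IsFaceT n (insert (Sum.inr (p.1, p.2, k0)) U) := by
        rintro ⟨N, hbad, hsub⟩
        refine hf ⟨N, fun q hq => ?_, hbad⟩
        by_cases hqp : q = p
        · exact hqp ▸ Finset.mem_insert_self _ _
        · refine Finset.mem_insert_of_mem ((memS q).mpr ⟨?_, fun k => ?_⟩)
          · rcases Finset.mem_insert.mp (hsub (mem_tnf_inl.mpr hq)) with h | h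
            · exact absurd h (by simp)
            · exact h
          · rcases Finset.mem_insert.mp (hsub (mem_tnf_inr.mpr hq)) with h | h
            · simp only [Sum.inr.injEq, Prod.mk.injEq] at h
              exact absurd (Prod.ext h.1 h.2.1) hqp
            · exact h
      have heq := hmax _ hface' (Finset.subset_insert _ _)
      exact hk0 (heq ▸ Finset.mem_insert_self _ _)
    · have hface' : IsFaceT n (insert (Sum.inl p) U) := by
        rintro ⟨N, hbad, hsub⟩
        refine hf ⟨N, fun q hq => ?_, hbad⟩
        by_cases hqp : q = p
        · exact hqp ▸ Finset.mem_insert_self _ _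
        · refine Finset.mem_insert_of_mem ((memS q).mpr ⟨?_, fun k => ?_⟩)
          · rcases Finset.mem_insert.mp (hsub (mem_tnf_inl.mpr hq)) with h | h
            · exact absurd (Sum.inl.inj h) hqp
            · exact h
          · rcases Finset.mem_insert.mp (hsub (mem_tnf_inr.mpr hq)) with h | h
            · exact absurd h (by simp)
            · exact h
      have heq := hmax _ hface' (Finset.subset_insert _ _)
      exact hpU (heq ▸ Finset.mem_insert_self _ _)
  -- S is a facet of Δₙ
  have hSfacet : IsFacetD n S := by
    refine ⟨hSface, fun W hW hSW => ?_⟩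
    by_contra hne
    obtain ⟨p, hpW, hpS⟩ : ∃ p, p ∈ W ∧ p ∉ S := by
      by_contra h
      push_neg at h
      exact hne (Finset.Subset.antisymm (fun p hp => h p hp) hSW)
    refine hSmax p hpS ?_
    rintro ⟨V, hVsub, hVbad⟩
    exact hW ⟨V, hVsub.trans (Finset.insert_subset_iff.mpr ⟨hpW, hSW⟩), hVbad⟩
  refine ⟨claim1, ⟨hSfacet, facetD_card hn S hSfacet⟩, ?_⟩
  intro p hpU hnall
  obtain ⟨k, hk⟩ := not_forall.mp hnall
  exact ⟨k, hk, fun k' hk' => by_contra fun hne => claimU p k' k hne hk' hk⟩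
end

section
/- Every facet of Δ̃ₙ can be obtained from a facet of the form W ∪ {all camera variables a_{ijk}}, with W a facet of Δₙ, by repeatedly applying the exchange: pick x_{ij} not in the current facet and replace one camera variable a_{ijk} in the facet by x_{ij}. Conversely, every set obtained by this process is a facet of Δ̃ₙ. -/
open Finset

/-- One exchange step: pick `x_{ij}` not in the current set and replace one
camera variable `a_{ijk}` of the set by `x_{ij}`. -/
def ExchangeStep {n : ℕ} (U U' : Finset (TGround n)) : Prop :=
  ∃ (p : Fin n × Fin 3) (k : Fin 4),
    Sum.inl p ∉ U ∧ Sum.inr (p.1, p.2, k) ∈ U ∧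
    U' = insert (Sum.inl p) (U.erase (Sum.inr (p.1, p.2, k)))

/-- The set of all `12n` camera variables. -/
def allCams (n : ℕ) : Finset (TGround n) :=
  (Finset.univ : Finset (Fin n × Fin 3 × Fin 4)).image Sum.inr


open Finset

section Aux

variable {n : ℕ}

def Cam (p : Fin n × Fin 3) (k : Fin 4) : TGround n := Sum.inr (p.1, p.2, k)

lemma cam_ne_inl (p q : Fin n × Fin 3) (k : Fin 4) : Cam p k ≠ Sum.inl q := by
  simp [Cam]

lemma cam_eq_iff {p q : Fin n × Fin 3} {k k' : Fin 4} :
    Cam p k = Cam q k' ↔ p = q ∧ k = k' := by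
  simp [Cam, Prod.ext_iff, and_assoc]

def SOf (U : Finset (TGround n)) : Finset (Fin n × Fin 3) :=
  Finset.univ.filter (fun p => Sum.inl p ∈ U ∧ ∀ k : Fin 4, Cam p k ∈ U)

lemma mem_SOf {U : Finset (TGround n)} {p : Fin n × Fin 3} :
    p ∈ SOf U ↔ Sum.inl p ∈ U ∧ ∀ k : Fin 4, Cam p k ∈ U := by
  simp [SOf]

lemma SOf_mono {U V : Finset (TGround n)} (h : U ⊆ V) : SOf U ⊆ SOf V := by
  intro p hp
  rw [mem_SOf] at hp ⊢
  exact ⟨h hp.1, fun k => h (hp.2 k)⟩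

lemma tildeNonface_subset_iff {N : Finset (Fin n × Fin 3)} {U : Finset (TGround n)} :
    tildeNonface N ⊆ U ↔ N ⊆ SOf U := by
  constructor
  · intro h p hp
    rw [mem_SOf]
    refine ⟨h ?_, fun k => h ?_⟩
    · simp only [tildeNonface, mem_union, mem_image]
      exact Or.inl ⟨p, hp, rfl⟩
    · simp only [tildeNonface, mem_union, mem_image]
      exact Or.inr ⟨⟨p, k⟩, by simp [hp], rfl⟩
  · intro h e he
    simp only [tildeNonface, mem_union, mem_image, mem_product] at he
    rcases he with ⟨p, hp, rfl⟩ | ⟨⟨p, k⟩, ⟨hp, -⟩, rfl⟩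
    · exact (mem_SOf.mp (h hp)).1
    · exact (mem_SOf.mp (h hp)).2 k

lemma isFaceT_iff {U : Finset (TGround n)} : IsFaceT n U ↔ IsFaceD n (SOf U) := by
  unfold IsFaceT IsFaceD
  constructor
  · rintro h ⟨N, hsub, hbad⟩
    exact h ⟨N, hbad, tildeNonface_subset_iff.mpr hsub⟩
  · rintro h ⟨N, hbad, hsub⟩
    exact h ⟨N, tildeNonface_subset_iff.mp hsub, hbad⟩

/-- Structural characterization of the sets reachable from `W.image inl ∪ allCams`. -/
def Good (W : Finset (Fin n × Fin 3)) (U : Finset (TGround n)) : Prop :=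
  ∀ p : Fin n × Fin 3,
    (p ∈ W → Sum.inl p ∈ U ∧ ∀ k, Cam p k ∈ U) ∧
    (p ∉ W →
      (Sum.inl p ∉ U ∧ ∀ k, Cam p k ∈ U) ∨
      (Sum.inl p ∈ U ∧ ∃ k, Cam p k ∉ U ∧ ∀ k', k' ≠ k → Cam p k' ∈ U))

lemma SOf_good {W : Finset (Fin n × Fin 3)} {U : Finset (TGround n)} (h : Good W U) :
    SOf U = W := by
  ext p
  rw [mem_SOf]
  constructor
  · intro ⟨h1, h2⟩
    by_contra hpW
    rcases (h p).2 hpW with ⟨h3, -⟩ | ⟨-, k, h3, -⟩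
    · exact h3 h1
    · exact h3 (h2 k)
  · exact (h p).1

lemma facetD_insert_bad {W : Finset (Fin n × Fin 3)} (hW : IsFacetD n W)
    {p : Fin n × Fin 3} (hp : p ∉ W) :
    ∃ N, N ⊆ insert p W ∧ IsBadProfile (profileOf N) := by
  by_contra h
  push_neg at h
  have hface : IsFaceD n (insert p W) := by
    rintro ⟨N, hsub, hbad⟩
    exact h N hsub hbad
  have := hW.2 (insert p W) hface (subset_insert _ _)
  exact hp (this ▸ mem_insert_self p W)

lemma good_start (W : Finset (Fin n × Fin 3)) :
    Good W (W.image Sum.inl ∪ allCams n) := by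
  intro p
  constructor
  · intro hpW
    constructor
    · exact mem_union_left _ (mem_image_of_mem _ hpW)
    · intro k
      exact mem_union_right _ (by simp [allCams, Cam])
  · intro hpW
    left
    constructor
    · simp only [mem_union, mem_image, allCams]
      rintro (⟨q, hq, hqe⟩ | ⟨q, -, hqe⟩)
      · obtain rfl := Sum.inl.injEq .. ▸ hqe
        exact hpW hq
      · exact absurd hqe (by simp)
    · intro k
      exact mem_union_right _ (by simp [allCams, Cam])

lemma good_step {W : Finset (Fin n × Fin 3)} {U U' : Finset (TGround n)}
    (h : Good W U) (hs : ExchangeStep U U') : Good W U' := by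
  obtain ⟨p, k, hinl, hcam, rfl⟩ := hs
  have hcamk : Sum.inr (p.1, p.2, k) = Cam p k := rfl
  have hpW : p ∉ W := fun hpW => hinl ((h p).1 hpW).1
  intro q
  constructor
  · intro hqW
    have hq := (h q).1 hqW
    have hqp : q ≠ p := fun e => hpW (e ▸ hqW)
    refine ⟨?_, fun k' => ?_⟩
    · exact mem_insert_of_mem (mem_erase.mpr ⟨by simp [Cam, Ne, Sum.inr.injEq], hq.1⟩)
    · refine mem_insert_of_mem (mem_erase.mpr ⟨?_, hq.2 k'⟩)
      rw [hcamk, Ne, cam_eq_iff]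
      exact fun ⟨e, _⟩ => hqp e
  · intro hqW
    by_cases hqp : q = p
    · subst hqp
      right
      refine ⟨mem_insert_self _ _, k, ?_, fun k' hk' => ?_⟩
      · rw [mem_insert]
        rintro (he | he)
        · exact cam_ne_inl q q k he
        · exact (notMem_erase _ _) (hcamk ▸ he)
      · rcases (h q).2 hqW with ⟨-, hall⟩ | ⟨hin, -⟩
        · refine mem_insert_of_mem (mem_erase.mpr ⟨?_, hall k'⟩)
          rw [hcamk, Ne, cam_eq_iff]
          exact fun ⟨_, e⟩ => hk' e
        · exact absurd hin hinl
    · have mem_iff : ∀ e : TGround n, e ≠ Sum.inl p → e ≠ Cam p k →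
          (e ∈ insert (Sum.inl p) (U.erase (Sum.inr (p.1, p.2, k))) ↔ e ∈ U) := by
        intro e h1 h2
        rw [mem_insert, mem_erase]
        constructor
        · rintro (he | ⟨-, he⟩)
          · exact absurd he h1
          · exact he
        · intro he
          exact Or.inr ⟨hcamk ▸ h2, he⟩
      have hinl_ne : (Sum.inl q : TGround n) ≠ Sum.inl p := by simpa using hqp
      have hcam_ne : ∀ k', Cam q k' ≠ Cam p k := fun k' e => hqp (cam_eq_iff.mp e).1
      rcases (h q).2 hqW with ⟨h1, h2⟩ | ⟨h1, k₀, h2, h3⟩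
      · left
        refine ⟨fun he => h1 ((mem_iff _ hinl_ne (cam_ne_inl p q k).symm).mp he), fun k' =>
          (mem_iff _ (cam_ne_inl q p k') (hcam_ne k')).mpr (h2 k')⟩
      · right
        refine ⟨(mem_iff _ hinl_ne (cam_ne_inl p q k).symm).mpr h1, k₀,
          fun he => h2 ((mem_iff _ (cam_ne_inl q p k₀) (hcam_ne k₀)).mp he),
          fun k' hk' => (mem_iff _ (cam_ne_inl q p k') (hcam_ne k')).mpr (h3 k' hk')⟩

lemma good_facetT {W : Finset (Fin n × Fin 3)} {U : Finset (TGround n)}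
    (hW : IsFacetD n W) (h : Good W U) : IsFacetT n U := by
  have hS : SOf U = W := SOf_good h
  constructor
  · rw [isFaceT_iff, hS]; exact hW.1
  · intro V hV hUV
    refine Subset.antisymm ?_ hUV
    intro e heV
    by_contra heU
    -- find p ∉ W with p ∈ SOf V
    have key : ∃ p : Fin n × Fin 3, p ∉ W ∧ p ∈ SOf V := by
      rcases e with p | ⟨i, j, k⟩
      ·
        have hpW : p ∉ W := fun hpW => heU ((h p).1 hpW).1
        rcases (h p).2 hpW with ⟨-, h2⟩ | ⟨h1, -⟩
        · exact ⟨p, hpW, mem_SOf.mpr ⟨heV, fun k => hUV (h2 k)⟩⟩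
        · exact absurd h1 heU
      · set p : Fin n × Fin 3 := (i, j) with hp
        have heV' : Cam p k ∈ V := heV
        have heU' : Cam p k ∉ U := heU
        have hpW : p ∉ W := fun hpW => heU (((h p).1 hpW).2 k)
        rcases (h p).2 hpW with ⟨-, h2⟩ | ⟨h1, k₀, h2, h3⟩
        · exact absurd (h2 k) heU
        · have hk : k = k₀ := by
            by_contra hk
            exact heU (h3 k hk)
          refine ⟨p, hpW, mem_SOf.mpr ⟨hUV h1, fun k' => ?_⟩⟩
          by_cases hk' : k' = k₀
          · subst hk'; subst hk; exact heV
          · exact hUV (h3 k' hk')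
    obtain ⟨p, hpW, hpV⟩ := key
    obtain ⟨N, hNsub, hNbad⟩ := facetD_insert_bad hW hpW
    have : N ⊆ SOf V := by
      intro q hq
      rcases mem_insert.mp (hNsub hq) with rfl | hqW
      · exact hpV
      · exact SOf_mono hUV (hS ▸ hqW)
    exact hV ⟨N, hNbad, tildeNonface_subset_iff.mpr this⟩

lemma good_reachable {W : Finset (Fin n × Fin 3)} {U : Finset (TGround n)}
    (h : Good W U) :
    Relation.ReflTransGen ExchangeStep (W.image Sum.inl ∪ allCams n) U := by
  generalize hm : (allCams n \ U).card = m
  induction m generalizing U with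
  | zero =>
    have hsub : allCams n ⊆ U := by
      rw [← sdiff_eq_empty_iff_subset]
      exact card_eq_zero.mp hm
    have huq : W.image Sum.inl ∪ allCams n = U := by
      ext e
      rcases e with p | c
      · simp only [mem_union, mem_image, allCams]
        constructor
        · rintro (⟨q, hq, hqe⟩ | ⟨q, -, hqe⟩)
          · obtain rfl : q = p := by simpa using hqe
            exact ((h q).1 hq).1
          · exact absurd hqe (by simp)
        · intro he
          left
          refine ⟨p, ?_, rfl⟩
          by_contra hpW
          rcases (h p).2 hpW with ⟨h1, -⟩ | ⟨-, k, h2, -⟩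
          · exact h1 he
          · exact h2 (hsub (mem_image_of_mem _ (mem_univ _)))
      · have h1 : (Sum.inr c : TGround n) ∈ allCams n := mem_image_of_mem _ (mem_univ c)
        simp only [mem_union]
        exact ⟨fun _ => hsub h1, fun _ => Or.inr h1⟩
    rw [huq]
  | succ m ih =>
    have hne : (allCams n \ U).Nonempty := by
      rw [← card_pos, hm]; omega
    obtain ⟨e, he⟩ := hne
    rw [mem_sdiff] at he
    obtain ⟨heC, heU⟩ := he
    simp only [allCams, mem_image, mem_univ, true_and] at heC
    obtain ⟨⟨i, j, k⟩, rfl⟩ := heC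
    set p : Fin n × Fin 3 := (i, j) with hp
    have hek : (Sum.inr (i, j, k) : TGround n) = Cam p k := rfl
    rw [hek] at heU
    have hpW : p ∉ W := fun hpW => heU (((h p).1 hpW).2 k)
    rcases (h p).2 hpW with ⟨-, h2⟩ | ⟨h1, k₀, h2, h3⟩
    · exact absurd (h2 k) heU
    have hk : k = k₀ := by
      by_contra hk
      exact heU (h3 k hk)
    subst hk
    -- reverse the step
    set U₀ : Finset (TGround n) := insert (Cam p k) (U.erase (Sum.inl p)) with hU₀
    have hstep : ExchangeStep U₀ U := by
      refine ⟨p, k, ?_, ?_, ?_⟩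
      · rw [hU₀, mem_insert]
        rintro (he | he)
        · exact cam_ne_inl p p k he.symm
        · exact (notMem_erase _ _) he
      · exact mem_insert_self _ _
      · have h2' : Cam p k ∉ U.erase (Sum.inl p) := fun he => h2 (mem_of_mem_erase he)
        rw [show (Sum.inr (p.1, p.2, k) : TGround n) = Cam p k from rfl, hU₀,
          erase_insert h2', insert_erase h1]
    have hgood₀ : Good W U₀ := by
      intro q
      have mem_iff : ∀ x : TGround n, x ≠ Sum.inl p → x ≠ Cam p k →
          (x ∈ U₀ ↔ x ∈ U) := by
        intro x hx1 hx2
        rw [hU₀, mem_insert, mem_erase]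
        constructor
        · rintro (hx | ⟨-, hx⟩)
          · exact absurd hx hx2
          · exact hx
        · intro hx
          exact Or.inr ⟨hx1, hx⟩
      constructor
      · intro hqW
        have hqp : q ≠ p := fun e => hpW (e ▸ hqW)
        have hq := (h q).1 hqW
        refine ⟨(mem_iff _ (by simpa using hqp) (cam_ne_inl p q k).symm).mpr hq.1,
          fun k' => (mem_iff _ (cam_ne_inl q p k')
            (fun e => hqp (cam_eq_iff.mp e).1)).mpr (hq.2 k')⟩
      · intro hqW
        by_cases hqp : q = p
        · subst hqp
          left
          refine ⟨?_, fun k' => ?_⟩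
          · rw [hU₀, mem_insert]
            rintro (he | he)
            · exact cam_ne_inl p p k he.symm
            · exact (notMem_erase _ _) he
          · by_cases hk' : k' = k
            · subst hk'; exact mem_insert_self _ _
            · exact (mem_iff _ (cam_ne_inl p p k')
                (fun e => hk' (cam_eq_iff.mp e).2)).mpr (h3 k' hk')
        · have hcam_ne : ∀ k', Cam q k' ≠ Cam p k := fun k' e => hqp (cam_eq_iff.mp e).1
          have hinl_ne : (Sum.inl q : TGround n) ≠ Sum.inl p := by simpa using hqp
          rcases (h q).2 hqW with ⟨ha, hb⟩ | ⟨ha, k₁, hb, hc⟩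
          · left
            exact ⟨fun he => ha ((mem_iff _ hinl_ne (cam_ne_inl p q k).symm).mp he),
              fun k' => (mem_iff _ (cam_ne_inl q p k') (hcam_ne k')).mpr (hb k')⟩
          · right
            exact ⟨(mem_iff _ hinl_ne (cam_ne_inl p q k).symm).mpr ha, k₁,
              fun he => hb ((mem_iff _ (cam_ne_inl q p k₁) (hcam_ne k₁)).mp he),
              fun k' hk' => (mem_iff _ (cam_ne_inl q p k') (hcam_ne k')).mpr (hc k' hk')⟩
    have hcard : (allCams n \ U₀).card = m := by
      have heq : allCams n \ U₀ = (allCams n \ U).erase (Cam p k) := by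
        ext x
        constructor
        · intro hx
          rw [mem_sdiff] at hx
          refine mem_erase.mpr ⟨fun e => hx.2 (e ▸ mem_insert_self _ _),
            mem_sdiff.mpr ⟨hx.1, fun hxU => ?_⟩⟩
          apply hx.2
          refine mem_insert_of_mem (mem_erase.mpr ⟨?_, hxU⟩)
          obtain ⟨c, -, rfl⟩ := mem_image.mp hx.1
          simp
        · intro hx
          rw [mem_erase, mem_sdiff] at hx
          refine mem_sdiff.mpr ⟨hx.2.1, ?_⟩
          rw [hU₀, mem_insert]
          rintro (he | he)
          · exact hx.1 he
          · exact hx.2.2 (mem_of_mem_erase he)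
      rw [heq, card_erase_of_mem (by rw [mem_sdiff]; exact ⟨by simp [allCams, Cam], h2⟩), hm]
      omega
    exact (ih hgood₀ hcard).tail hstep

end Aux
lemma SOf_insert_inl {n : ℕ} {p : Fin n × Fin 3} {U : Finset (TGround n)} :
    SOf (insert (Sum.inl p) U) ⊆ insert p (SOf U) := by
  intro q hq
  rw [mem_SOf] at hq
  by_cases hqp : q = p
  · exact hqp ▸ mem_insert_self _ _
  · refine mem_insert_of_mem (mem_SOf.mpr ⟨?_, fun k => ?_⟩)
    · rcases mem_insert.mp hq.1 with he | he
      · exact absurd (by simpa using he) hqp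
      · exact he
    · rcases mem_insert.mp (hq.2 k) with he | he
      · exact absurd he (cam_ne_inl q p k)
      · exact he

lemma SOf_insert_cam {n : ℕ} {p : Fin n × Fin 3} {k : Fin 4} {U : Finset (TGround n)} :
    SOf (insert (Cam p k) U) ⊆ insert p (SOf U) := by
  intro q hq
  rw [mem_SOf] at hq
  by_cases hqp : q = p
  · exact hqp ▸ mem_insert_self _ _
  · refine mem_insert_of_mem (mem_SOf.mpr ⟨?_, fun k' => ?_⟩)
    · rcases mem_insert.mp hq.1 with he | he
      · exact absurd he.symm (cam_ne_inl p q k)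
      · exact he
    · rcases mem_insert.mp (hq.2 k') with he | he
      · exact absurd (cam_eq_iff.mp he).1 hqp
      · exact he

/-- Every facet of `Δ̃ₙ` is obtained from some `W ∪ {all camera variables}`,
`W` a facet of `Δₙ`, by repeatedly exchanging a camera variable `a_{ijk}` for a
missing image variable `x_{ij}`; conversely every set obtained by this process
is a facet of `Δ̃ₙ`. -/
theorem tilde_Delta_n_facets_via_exchange (n : ℕ) (hn : 4 ≤ n)
    (U : Finset (TGround n)) :
    IsFacetT n U ↔
      ∃ W : Finset (Fin n × Fin 3), IsFacetD n W ∧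
        Relation.ReflTransGen ExchangeStep (W.image Sum.inl ∪ allCams n) U := by
  constructor
  · intro hU
    set W := SOf U with hWdef
    have hface : IsFaceD n W := isFaceT_iff.mp hU.1
    have key : ∀ p : Fin n × Fin 3, p ∉ W →
        (∃ N, N ⊆ insert p W ∧ IsBadProfile (profileOf N)) ∧
        ((Sum.inl p ∉ U ∧ ∀ k, Cam p k ∈ U) ∨
         (Sum.inl p ∈ U ∧ ∃ k, Cam p k ∉ U ∧ ∀ k', k' ≠ k → Cam p k' ∈ U)) := by
      intro p hpW
      by_cases hinl : Sum.inl p ∈ U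
      · have : ∃ k, Cam p k ∉ U := by
          by_contra hall
          push_neg at hall
          exact hpW (mem_SOf.mpr ⟨hinl, hall⟩)
        obtain ⟨k, hk⟩ := this
        set V := insert (Cam p k) U with hV
        have hVne : V ≠ U := fun e => hk (e ▸ mem_insert_self _ _)
        have hVnotface : ¬ IsFaceT n V := fun hf => hVne (hU.2 V hf (subset_insert _ _))
        obtain ⟨N, hNbad, hNsub⟩ := not_not.mp hVnotface
        rw [tildeNonface_subset_iff] at hNsub
        have hSV : SOf V ⊆ insert p W := SOf_insert_cam
        have hpN : p ∈ N := by
          by_contra hpN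
          refine hface ⟨N, fun q hq => ?_, hNbad⟩
          rcases mem_insert.mp (hSV (hNsub hq)) with rfl | hqW
          · exact absurd hq hpN
          · exact hqW
        have hpSV := mem_SOf.mp (hNsub hpN)
        refine ⟨⟨N, hNsub.trans hSV, hNbad⟩, Or.inr ⟨hinl, k, hk, fun k' hk' => ?_⟩⟩
        rcases mem_insert.mp (hpSV.2 k') with he | he
        · exact absurd (cam_eq_iff.mp he).2 hk'
        · exact he
      · set V := insert (Sum.inl p) U with hV
        have hVne : V ≠ U := fun e => hinl (e ▸ mem_insert_self _ _)
        have hVnotface : ¬ IsFaceT n V := fun hf => hVne (hU.2 V hf (subset_insert _ _))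
        obtain ⟨N, hNbad, hNsub⟩ := not_not.mp hVnotface
        rw [tildeNonface_subset_iff] at hNsub
        have hSV : SOf V ⊆ insert p W := SOf_insert_inl
        have hpN : p ∈ N := by
          by_contra hpN
          refine hface ⟨N, fun q hq => ?_, hNbad⟩
          rcases mem_insert.mp (hSV (hNsub hq)) with rfl | hqW
          · exact absurd hq hpN
          · exact hqW
        have hpSV := mem_SOf.mp (hNsub hpN)
        refine ⟨⟨N, hNsub.trans hSV, hNbad⟩, Or.inl ⟨hinl, fun k => ?_⟩⟩
        rcases mem_insert.mp (hpSV.2 k) with he | he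
        · exact absurd he (cam_ne_inl p p k)
        · exact he
    have hfacetD : IsFacetD n W := by
      refine ⟨hface, fun W' hW' hsub => ?_⟩
      refine Subset.antisymm (fun p hp => ?_) hsub
      by_contra hpW
      obtain ⟨⟨N, hNsub, hNbad⟩, -⟩ := key p hpW
      refine hW' ⟨N, fun q hq => ?_, hNbad⟩
      rcases mem_insert.mp (hNsub hq) with rfl | hqW
      · exact hp
      · exact hsub hqW
    have hgood : Good W U := by
      intro p
      refine ⟨fun hpW => mem_SOf.mp hpW, fun hpW => (key p hpW).2⟩
    exact ⟨W, hfacetD, good_reachable hgood⟩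
  · rintro ⟨W, hW, hrel⟩
    have hgood : Good W U := by
      induction hrel with
      | refl => exact good_start W
      | tail _ hstep ih => exact good_step ih hstep
    exact good_facetT hW hgood
end

section
/- For n = 4 cameras, deleting {x_{21}, x_{31}, x_{41}} and contracting {x_{11}, x_{12}, x_{22}, x_{32}, x_{42}} in the matroid Δ₄ = U_{3,12} ∨ U_{1,3}^{⊕4} yields the uniform matroid U_{2,4} on {x_{13}, x_{23}, x_{33}, x_{43}}. -/
open Finset

/-- Independence in the matroid `Δₙ = U_{3,3n} ∨ U_{1,3}^{⊕n}`: a set is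
independent iff it is the union of a set of size at most `3` with a set
containing at most one element per index `i`. -/
def IndepD (n : ℕ) (U : Finset (Fin n × Fin 3)) : Prop :=
  ∃ B C : Finset (Fin n × Fin 3), U = B ∪ C ∧
    (∀ i : Fin n, (B.filter (fun p => p.1 = i)).card ≤ 1) ∧ C.card ≤ 3

lemma card_le_four (B : Finset (Fin 4 × Fin 3))
    (hB : ∀ i : Fin 4, (B.filter (fun p => p.1 = i)).card ≤ 1) : B.card ≤ 4 := by
  have h := Finset.card_eq_sum_card_fiberwise
    (f := Prod.fst) (s := B) (t := (univ : Finset (Fin 4)))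
    (fun x _ => mem_univ _)
  rw [h]
  calc ∑ i : Fin 4, (B.filter (fun p => p.1 = i)).card ≤ ∑ _i : Fin 4, 1 :=
        Finset.sum_le_sum fun i _ => hB i
    _ = 4 := by simp

/-- In `Δ₄ = U_{3,12} ∨ U_{1,3}^{⊕4}` (cameras indexed `0,…,3` and image
coordinates `0,1,2`), deleting `{x_{21}, x_{31}, x_{41}}` and contracting the
independent set `T = {x_{11}, x_{12}, x_{22}, x_{32}, x_{42}}` yields the
uniform matroid `U_{2,4}` on `E = {x_{13}, x_{23}, x_{33}, x_{43}}`: a subset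
`I ⊆ E` is independent in the minor iff `|I| ≤ 2`. -/
theorem Delta_four_minor_U24 :
    let T : Finset (Fin 4 × Fin 3) :=
      {((0 : Fin 4), (0 : Fin 3)), ((0 : Fin 4), (1 : Fin 3)),
       ((1 : Fin 4), (1 : Fin 3)), ((2 : Fin 4), (1 : Fin 3)),
       ((3 : Fin 4), (1 : Fin 3))}
    let E : Finset (Fin 4 × Fin 3) :=
      {((0 : Fin 4), (2 : Fin 3)), ((1 : Fin 4), (2 : Fin 3)),
       ((2 : Fin 4), (2 : Fin 3)), ((3 : Fin 4), (2 : Fin 3))}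
    IndepD 4 T ∧ Disjoint T E ∧ E.card = 4 ∧
      ∀ I : Finset (Fin 4 × Fin 3), I ⊆ E → (IndepD 4 (I ∪ T) ↔ I.card ≤ 2) := by
  intro T E
  refine ⟨?_, ?_, ?_, ?_⟩
  · exact ⟨{((0 : Fin 4), (0 : Fin 3)), ((1 : Fin 4), (1 : Fin 3)),
      ((2 : Fin 4), (1 : Fin 3)), ((3 : Fin 4), (1 : Fin 3))},
      {((0 : Fin 4), (1 : Fin 3))}, by decide, by decide, by decide⟩
  · decide
  · decide
  · intro I hIE
    have hET : Disjoint E T := by decide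
    have hdisj : Disjoint I T := Finset.disjoint_of_subset_left hIE hET
    have hcard : (I ∪ T).card = I.card + 5 := by
      rw [Finset.card_union_of_disjoint hdisj]
      congr 1
    constructor
    · rintro ⟨B, C, hU, hB, hC⟩
      have h1 : (I ∪ T).card ≤ B.card + C.card := hU ▸ Finset.card_union_le B C
      have h2 : B.card ≤ 4 := card_le_four B hB
      omega
    · intro hI
      refine ⟨{((0 : Fin 4), (0 : Fin 3)), ((1 : Fin 4), (1 : Fin 3)),
        ((2 : Fin 4), (1 : Fin 3)), ((3 : Fin 4), (1 : Fin 3))},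
        insert ((0 : Fin 4), (1 : Fin 3)) I, ?_, by decide, ?_⟩
      · ext a
        simp only [Finset.mem_union, Finset.mem_insert, Finset.mem_singleton, T]
        tauto
      · calc (insert ((0 : Fin 4), (1 : Fin 3)) I).card ≤ I.card + 1 :=
            Finset.card_insert_le _ _
          _ ≤ 3 := by omega
end
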